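/- arXiv:1811.10513 — 5 statements merged into one kernel-verified Lean document; each statement's English description precedes it below -/
import Mathlib

section
/- The FBDF2 method is consistent of order 2: h^(-α) · ((3 - 4e^(-h) + e^(-2h))/2)^α = 1 + O(h²) as h → 0⁺. -/
open Asymptotics Real Filter Topology

/-!
Write `g h = (3 - 4 e^(-h) + e^(-2h)) / 2`. Replacing both exponentials by their quadratic Taylor
polynomials gives exactly `h`, so `g h - h = O(h³)`, i.e. `g h / h - 1 = O(h²)`. Since `g h ≥ 0`
for `h ≥ 0`, the quantity to estimate is `(g h / h)^α - 1`, and `t ↦ t^α` with `0 ≤ α ≤ 1`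
moves no point of `[0, ∞)` further from `1`.
-/

lemma abs_rpow_sub_one_le_abs_sub_one {x α : ℝ} (hx : 0 ≤ x) (hα₀ : 0 ≤ α) (hα₁ : α ≤ 1) :
    |x ^ α - 1| ≤ |x - 1| := by
  rcases le_total x 1 with hx₁ | hx₁
  · have hlow := self_le_rpow_of_le_one hx hx₁ hα₁
    have hup := rpow_le_one hx hx₁ hα₀
    rw [abs_of_nonpos (by linarith), abs_of_nonpos (by linarith)]
    linarith
  · have hup := rpow_le_self_of_one_le hx₁ hα₁
    have hlow := one_le_rpow hx₁ hα₀
    rw [abs_of_nonneg (by linarith), abs_of_nonneg (by linarith)]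
    linarith

lemma exp_const_mul_sub_taylor_two_isBigO (c : ℝ) :
    (fun h => exp (c * h) - (1 + c * h + (c * h) ^ 2 / 2)) =O[𝓝 0] (· ^ 3) := by
  have htaylor : (fun x => exp x - (1 + x + x ^ 2 / 2)) =O[𝓝 0] (· ^ 3) := by
    simpa [Finset.sum_range_succ, add_assoc] using exp_sub_sum_range_isBigO_pow 3
  have hc : Tendsto (fun h : ℝ => c * h) (𝓝 0) (𝓝 0) := by
    simpa using (continuous_const_mul c).tendsto 0
  refine (htaylor.comp_tendsto hc).trans ?_
  simpa only [Function.comp_def, mul_pow] using isBigO_const_mul_self (c ^ 3) (· ^ 3) (𝓝 0)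

lemma fbdf2_sub_self_isBigO :
    (fun h => (3 - 4 * exp (-h) + exp (-2 * h)) / 2 - h) =O[𝓝 0] (· ^ 3) := by
  -- the quadratic Taylor polynomials cancel: `(3 - 4 (1 - h + h²/2) + (1 - 2h + 2h²)) / 2 = h`
  refine (((exp_const_mul_sub_taylor_two_isBigO (-1)).const_mul_left (-2)).add
    ((exp_const_mul_sub_taylor_two_isBigO (-2)).const_mul_left (1 / 2))).congr_left fun h => ?_
  simp only [neg_one_mul]
  ring

lemma fbdf2_sub_self_div_self_isBigO :
    (fun h => ((3 - 4 * exp (-h) + exp (-2 * h)) / 2 - h) / h) =O[𝓝 0] (· ^ 2) := by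
  refine (fbdf2_sub_self_isBigO.mul (isBigO_refl (·⁻¹) _)).congr (fun h => rfl) (fun h => ?_)
  rcases eq_or_ne h 0 with rfl | hh
  · simp
  · field_simp

lemma fbdf2_nonneg {h : ℝ} (hh : 0 ≤ h) : 0 ≤ (3 - 4 * exp (-h) + exp (-2 * h)) / 2 := by
  have hsq : exp (-2 * h) = exp (-h) ^ 2 := by rw [sq, ← exp_add]; ring_nf
  have hle : exp (-h) ≤ 1 := exp_le_one_iff.mpr (by linarith)
  have hfactor : (3 - 4 * exp (-h) + exp (-2 * h)) / 2 = (1 - exp (-h)) * (3 - exp (-h)) / 2 := by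
    rw [hsq]; ring
  rw [hfactor]
  have := mul_nonneg (sub_nonneg.mpr hle) (by linarith : (0 : ℝ) ≤ 3 - exp (-h))
  positivity

/-- The FBDF2 method is consistent of order 2:
`h^(-α) * ((3 - 4 e^(-h) + e^(-2h))/2)^α = 1 + O(h²)` as `h → 0⁺`. -/
theorem stmt_1 (α : ℝ) (hα : 0 < α) (hα1 : α < 1) :
    (fun h : ℝ => h ^ (-α) * ((3 - 4 * Real.exp (-h) + Real.exp (-2*h)) / 2) ^ α - 1)
      =O[nhdsWithin 0 (Set.Ioi 0)] (fun h : ℝ => h ^ 2) := by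
  refine (IsBigO.of_bound 1 ?_).trans (fbdf2_sub_self_div_self_isBigO.mono nhdsWithin_le_nhds)
  filter_upwards [self_mem_nhdsWithin] with h (hh : 0 < h)
  have hg := fbdf2_nonneg hh.le
  rw [one_mul, Real.norm_eq_abs, Real.norm_eq_abs, rpow_neg hh.le, ← div_eq_inv_mul,
    ← div_rpow hg hh.le, sub_div, div_self hh.ne']
  exact abs_rpow_sub_one_le_abs_sub_one (div_nonneg hg hh.le) hα.le hα1.le
end

section
/- For the FBDF2 weights with 0 < α < 1: ω₀ > 0 and ωⱼ < 0 for all j ≥ 4. -/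
/-- For the FBDF2 weights with `0 < α < 1`: `ω₀ > 0` and `ωⱼ < 0` for all `j ≥ 4`. -/
theorem stmt_3 (α : ℝ) (hα : 0 < α) (hα1 : α < 1) (ω : ℕ → ℝ)
    (hω0 : ω 0 = 1) (hω1 : ω 1 = -(4/3) * α)
    (hrec : ∀ k : ℕ, 2 ≤ k →
      ω k = (4/3) * (1 - (α + 1)/(k : ℝ)) * ω (k - 1)
          + (1/3) * (2*(1 + α)/(k : ℝ) - 1) * ω (k - 2)) :
    0 < ω 0 ∧ ∀ j : ℕ, 4 ≤ j → ω j < 0 := by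
  have hpos : 0 < α * (1 - α) := mul_pos hα (by linarith)
  have h2 : ω 2 = α * (8*α - 5) / 9 := by
    have h := hrec 2 (by norm_num)
    norm_num [hω0, hω1] at h
    rw [h]; ring
  have h3 : ω 3 = 4*α*(8*α - 7)*(1 - α) / 81 := by
    have h := hrec 3 (by norm_num)
    norm_num [hω1, h2] at h
    rw [h]; ring
  have h4 : ω 4 = -(α*(1 - α)*(64*α^2 - 176*α + 123)) / 486 := by
    have h := hrec 4 (by norm_num)
    norm_num [h2, h3] at h
    rw [h]; ring
  have h4neg : ω 4 < 0 := by
    rw [h4]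
    have : 0 < 64*α^2 - 176*α + 123 := by nlinarith [sq_nonneg (8*α - 11)]
    have := mul_pos hpos this
    nlinarith
  have h43 : ω 4 ≤ ω 3 / 2 := by
    rw [h4, h3]
    have : 0 < 64*α^2 - 80*α + 39 := by nlinarith [sq_nonneg (8*α - 5)]
    nlinarith [mul_pos hpos this]
  have key : ∀ n : ℕ, 4 ≤ n → ω n < 0 ∧ ω n ≤ ω (n - 1) / 2 := by
    intro n hn
    induction n, hn using Nat.le_induction with
    | base => exact ⟨h4neg, h43⟩
    | succ n hn ih =>
      obtain ⟨ihneg, ihrat⟩ := ih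
      have hN : (0:ℝ) < (n:ℝ) + 1 := by positivity
      have hN5 : (5:ℝ) ≤ (n:ℝ) + 1 := by
        have : (4:ℝ) ≤ (n:ℝ) := by exact_mod_cast hn
        linarith
      have hr := hrec (n+1) (by omega)
      have hsub2 : n + 1 - 2 = n - 1 := by omega
      rw [show n + 1 - 1 = n from rfl, hsub2] at hr
      have hC : (1/3 : ℝ) * (2*(1 + α)/((n:ℝ)+1) - 1) < 0 := by
        have hlt : 2*(1 + α) < (n:ℝ) + 1 := by nlinarith
        have := (div_lt_one hN).mpr hlt
        linarith
      have hkey : ω (n+1) = (2/3) * ω n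
          + ((1/3) * (2*(1 + α)/((n:ℝ)+1) - 1)) * (ω (n-1) - 2 * ω n) := by
        rw [hr]
        push_cast
        field_simp
        ring
      have h1 : 0 ≤ ω (n-1) - 2 * ω n := by linarith
      have h2 : ((1/3) * (2*(1 + α)/((n:ℝ)+1) - 1)) * (ω (n-1) - 2 * ω n) ≤ 0 :=
        mul_nonpos_of_nonpos_of_nonneg (le_of_lt hC) h1
      refine ⟨by rw [hkey]; nlinarith, ?_⟩
      rw [show n + 1 - 1 = n from rfl, hkey]
      nlinarith
  exact ⟨by rw [hω0]; norm_num, fun j hj => (key j hj).1⟩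
end

section
/- For the FBDF2 weights with 0 < α < 1, the coefficients sum to zero: Σₖ₌₀^∞ ωₖ = 0, and every partial sum Σₖ₌₀^m ωₖ with m > 3 is strictly positive. -/
/-!
The partial sums `T n = ∑_{k<n} ω k` satisfy the three-term recurrence
`3(n+1) T(n+2) = (4n+3-4α) T(n+1) + (2α-n) T n`. From `n = 4` on this recurrence keeps the ratio
`T(n+1) / T n` inside `[1 - 2α/n, 1 - α/(2n)]`. Hence the `T n` are positive and decreasing (so
`ω n ≤ 0` for `n ≥ 4`), and `T n ≤ T 4 ∏ (1 - α/(2k)) → 0` because the harmonic series diverges.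
Partial sums tending to `0` together with an eventual sign give `∑ ω k = 0`.
-/

open Filter Topology Finset

theorem le_mul_exp_neg_sum_of_le_one_sub_mul {u a : ℕ → ℝ} (hu : ∀ n, 0 ≤ u n)
    (hstep : ∀ n, u (n + 1) ≤ (1 - a n) * u n) (n : ℕ) :
    u n ≤ u 0 * Real.exp (-∑ i ∈ range n, a i) := by
  induction n with
  | zero => simp
  | succ n ih =>
    calc u (n + 1) ≤ (1 - a n) * u n := hstep n
      _ ≤ Real.exp (-a n) * u n := by
        gcongr
        · exact hu n
        · linarith [Real.add_one_le_exp (-a n)]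
      _ ≤ Real.exp (-a n) * (u 0 * Real.exp (-∑ i ∈ range n, a i)) := by gcongr
      _ = u 0 * Real.exp (-∑ i ∈ range (n + 1), a i) := by
        rw [sum_range_succ, neg_add, Real.exp_add]; ring

theorem tendsto_zero_of_le_one_sub_div_mul {u : ℕ → ℝ} {c : ℝ} (hc : 0 < c)
    (hu : ∀ n, 0 ≤ u n) (hstep : ∀ n, u (n + 1) ≤ (1 - c / (n + 1)) * u n) :
    Tendsto u atTop (𝓝 0) := by
  have hsum : Tendsto (fun n ↦ ∑ i ∈ range n, c / ((i : ℝ) + 1)) atTop atTop := by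
    simp_rw [div_eq_mul_one_div c, ← mul_sum]
    exact Real.tendsto_sum_range_one_div_nat_succ_atTop.const_mul_atTop hc
  have hbound : Tendsto (fun n ↦ u 0 * Real.exp (-∑ i ∈ range n, c / ((i : ℝ) + 1)))
      atTop (𝓝 0) := by
    simpa using (Real.tendsto_exp_atBot.comp (tendsto_neg_atTop_atBot.comp hsum)).const_mul (u 0)
  exact tendsto_of_tendsto_of_tendsto_of_le_of_le tendsto_const_nhds hbound hu
    (le_mul_exp_neg_sum_of_le_one_sub_mul hu hstep)

theorem hasSum_of_tendsto_of_eventually_nonneg {f : ℕ → ℝ} {a : ℝ} (N : ℕ)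
    (hf : ∀ n, N ≤ n → 0 ≤ f n) (h : Tendsto (fun n ↦ ∑ i ∈ range n, f i) atTop (𝓝 a)) :
    HasSum f a := by
  rw [← hasSum_nat_add_iff' N, hasSum_iff_tendsto_nat_of_nonneg (fun i ↦ hf _ (by omega))]
  have htail : ∀ n, ∑ i ∈ range n, f (i + N) = ∑ i ∈ range (n + N), f i - ∑ i ∈ range N, f i := by
    intro n
    rw [add_comm n N, sum_range_add]
    simp [add_comm]
  simp_rw [htail]
  exact ((tendsto_add_atTop_iff_nat N).mpr h).sub_const _

section
variable {α : ℝ} {ω : ℕ → ℝ}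

theorem fbdf2_recurrence_mul (hrec : ∀ k : ℕ, 2 ≤ k →
      ω k = (4/3) * (1 - (α + 1)/(k : ℝ)) * ω (k - 1)
          + (1/3) * (2*(1 + α)/(k : ℝ) - 1) * ω (k - 2)) (n : ℕ) :
    3 * (n + 2) * ω (n + 2) = 4 * (n + 1 - α) * ω (n + 1) + (2 * α - n) * ω n := by
  rw [hrec (n + 2) (by omega), Nat.add_sub_cancel, show n + 2 - 1 = n + 1 by omega]
  push_cast
  field_simp
  ring

/-- The coefficient form of `(1 - z)(3 - z) f' = -2α(2 - z) f` for `f = ((1 - z)(3 - z)/2)^α`. -/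
theorem fbdf2_first_order (hω0 : ω 0 = 1) (hω1 : ω 1 = -(4/3) * α)
    (hrec : ∀ k : ℕ, 2 ≤ k →
      ω k = (4/3) * (1 - (α + 1)/(k : ℝ)) * ω (k - 1)
          + (1/3) * (2*(1 + α)/(k : ℝ) - 1) * ω (k - 2)) (n : ℕ) :
    3 * (n + 1) * ω (n + 1)
      = n * ω n - 4 * α * ∑ i ∈ range (n + 1), ω i + 2 * α * ∑ i ∈ range n, ω i := by
  induction n with
  | zero => simp [hω0, hω1]; ring
  | succ n ih =>
    simp only [sum_range_succ] at ih ⊢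
    push_cast
    linear_combination ih + fbdf2_recurrence_mul hrec n

theorem fbdf2_sum_range_recurrence (hω0 : ω 0 = 1) (hω1 : ω 1 = -(4/3) * α)
    (hrec : ∀ k : ℕ, 2 ≤ k →
      ω k = (4/3) * (1 - (α + 1)/(k : ℝ)) * ω (k - 1)
          + (1/3) * (2*(1 + α)/(k : ℝ) - 1) * ω (k - 2)) (n : ℕ) :
    3 * (n + 1) * ∑ i ∈ range (n + 2), ω i
      = (4 * n + 3 - 4 * α) * ∑ i ∈ range (n + 1), ω i + (2 * α - n) * ∑ i ∈ range n, ω i := by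
  have h := fbdf2_first_order hω0 hω1 hrec n
  simp only [sum_range_succ] at h ⊢
  linear_combination h

end

/-- `T (n + 1) / T n ∈ [1 - 2α/n, 1 - α/(2n)]` with `T n > 0`. For `n = 3` the upper bound fails
when `α` is close to `1`, which is why the induction starts at `4`. -/
def RatioBounds (α : ℝ) (T : ℕ → ℝ) (n : ℕ) : Prop :=
  0 < T n ∧ (n - 2 * α) * T n ≤ n * T (n + 1) ∧ 2 * n * T (n + 1) ≤ (2 * n - α) * T n

namespace RatioBounds

variable {α : ℝ} {T : ℕ → ℝ} {n : ℕ}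

theorem succ (hα : 0 < α) (hα1 : α < 1) (hn : 3 ≤ n)
    (hT : 3 * (n + 1) * T (n + 2) = (4 * n + 3 - 4 * α) * T (n + 1) + (2 * α - n) * T n)
    (h : RatioBounds α T n) : RatioBounds α T (n + 1) := by
  obtain ⟨hpos, hlower, hupper⟩ := h
  have hn' : (3 : ℝ) ≤ n := by exact_mod_cast hn
  have hpos' : 0 < T (n + 1) := by nlinarith
  refine ⟨hpos', ?_, ?_⟩ <;> push_cast
  · nlinarith
  · -- `(2n - 5α)(2n - α) ≤ 4n(n - 2α)` turns the upper bound at `n` into the one at `n + 1`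
    have key : 2 * n * ((2 * n - 5 * α) * T (n + 1)) ≤ 2 * n * (2 * (n - 2 * α) * T n) := by
      nlinarith [mul_le_mul_of_nonneg_left hupper (by linarith : (0 : ℝ) ≤ 2 * n - 5 * α)]
    have key' := le_of_mul_le_mul_left key (by linarith)
    nlinarith

theorem le_one_sub_div_mul (hn : 0 < n) (h : RatioBounds α T n) :
    T (n + 1) ≤ (1 - α / (2 * n)) * T n := by
  have hn' : (0 : ℝ) < n := by exact_mod_cast hn
  rw [one_sub_div (by positivity), div_mul_eq_mul_div, le_div_iff₀ (by positivity)]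
  linarith [h.2.2]

theorem four (hα : 0 < α) (hα1 : α < 1) (h1 : T 1 = 1) (h2 : T 2 = 1 - 4 / 3 * α)
    (hT : ∀ n : ℕ, 3 * (n + 1) * T (n + 2) = (4 * n + 3 - 4 * α) * T (n + 1) + (2 * α - n) * T n) :
    RatioBounds α T 4 := by
  have h3 := hT 1
  have h4 := hT 2
  have h5 := hT 3
  norm_num [h1, h2] at h3 h4 h5
  have e4 : T 4 = 1 - 181 / 81 * α + 44 / 27 * α ^ 2 - 32 / 81 * α ^ 3 := by
    linear_combination h4 / 9 + (11 - 4 * α) / 54 * h3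
  have e5 : T 5 = 1 - 403 / 162 * α + 1091 / 486 * α ^ 2 - 8 / 9 * α ^ 3 + 32 / 243 * α ^ 4 := by
    linear_combination h5 / 12 + (15 - 4 * α) / 12 * e4 + (2 * α - 3) / 72 * h3
  have h1α : 0 < 1 - α := by linarith
  refine ⟨?_, ?_, ?_⟩ <;> norm_num [e4, e5]
  · nlinarith [mul_pos h1α h1α, mul_pos (mul_pos h1α h1α) h1α, mul_pos hα h1α]
  · nlinarith [mul_pos hα h1α, mul_pos (mul_pos hα h1α) h1α,
      mul_pos (mul_pos (mul_pos hα h1α) h1α) h1α, sq_nonneg α, sq_nonneg (1 - α)]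
  · nlinarith [mul_pos hα h1α, mul_pos (mul_pos hα h1α) h1α,
      mul_pos (mul_pos (mul_pos hα h1α) h1α) h1α, sq_nonneg α, sq_nonneg (1 - α)]

theorem succ_le (hα : 0 ≤ α) (hn : 0 < n) (h : RatioBounds α T n) : T (n + 1) ≤ T n := by
  have hn' : (0 : ℝ) < n := by exact_mod_cast hn
  have : 0 ≤ α / (2 * n) := by positivity
  nlinarith [h.le_one_sub_div_mul hn, h.1]

theorem of_four_le (hα : 0 < α) (hα1 : α < 1) (h1 : T 1 = 1) (h2 : T 2 = 1 - 4 / 3 * α)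
    (hT : ∀ n : ℕ, 3 * (n + 1) * T (n + 2) = (4 * n + 3 - 4 * α) * T (n + 1) + (2 * α - n) * T n)
    {n : ℕ} (hn : 4 ≤ n) : RatioBounds α T n := by
  induction n, hn using Nat.le_induction with
  | base => exact four hα hα1 h1 h2 hT
  | succ n hn ih => exact ih.succ hα hα1 (by omega) (hT n)

end RatioBounds

/-- For the FBDF2 weights with `0 < α < 1`: `Σₖ ωₖ = 0` and every partial sum
`Σₖ₌₀^m ωₖ` with `m > 3` is strictly positive. -/
theorem stmt_5 (α : ℝ) (hα : 0 < α) (hα1 : α < 1) (ω : ℕ → ℝ)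
    (hω0 : ω 0 = 1) (hω1 : ω 1 = -(4/3) * α)
    (hrec : ∀ k : ℕ, 2 ≤ k →
      ω k = (4/3) * (1 - (α + 1)/(k : ℝ)) * ω (k - 1)
          + (1/3) * (2*(1 + α)/(k : ℝ) - 1) * ω (k - 2)) :
    (∑' k : ℕ, ω k) = 0 ∧
      ∀ m : ℕ, 3 < m → 0 < ∑ k ∈ Finset.range (m + 1), ω k := by
  set T : ℕ → ℝ := fun n ↦ ∑ k ∈ range n, ω k
  have hB : ∀ n, 4 ≤ n → RatioBounds α T n := fun n ↦
    RatioBounds.of_four_le hα hα1 (by simp [T, hω0]) (by simp [T, sum_range_succ, hω0, hω1]; ring)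
      (fbdf2_sum_range_recurrence hω0 hω1 hrec)
  have hT_lim : Tendsto T atTop (𝓝 0) := by
    rw [← tendsto_add_atTop_iff_nat 4]
    -- `α / (2(n + 4)) ≥ (α / 8) / (n + 1)`: a smaller constant absorbs the index shift
    refine tendsto_zero_of_le_one_sub_div_mul (c := α / 8) (by positivity)
      (fun n ↦ (hB (n + 4) (by omega)).1.le) fun n ↦ ?_
    calc T (n + 4 + 1) ≤ (1 - α / (2 * ((n + 4 : ℕ) : ℝ))) * T (n + 4) :=
          (hB _ (by omega)).le_one_sub_div_mul (by omega)
      _ ≤ (1 - α / 8 / (n + 1)) * T (n + 4) := by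
          have hc : α / 8 / (n + 1) ≤ α / (2 * ((n + 4 : ℕ) : ℝ)) := by
            rw [div_div]; push_cast
            exact div_le_div_of_nonneg_left hα.le (by positivity) (by linarith)
          exact mul_le_mul_of_nonneg_right (by linarith) (hB _ (by omega)).1.le
  have hω_sum : HasSum (-ω) 0 :=
    hasSum_of_tendsto_of_eventually_nonneg 4
      (fun n hn ↦ by simpa [T, sum_range_succ] using (hB n hn).succ_le hα.le (by omega))
      (by simpa [T] using hT_lim.neg)
  exact ⟨by simpa using hω_sum.neg.tsum_eq, fun m hm ↦ (hB (m + 1) (by omega)).1⟩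
end

section
/- For 1 < ζ ≤ 2, the WSGD coefficients satisfy 1 ≥ ϑ₀^(ζ) ≥ ϑ₃^(ζ) ≥ ϑ₄^(ζ) ≥ ... ≥ 0 (the tail from index 3 is nonnegative and nonincreasing, dominated by ϑ₀ ≤ 1). -/
/-!
The Grünwald weights satisfy `ω_{k+1} = ω_k (k - ζ)/(k + 1)`. For `1 ≤ ζ ≤ 2` and `k ≥ 2` this ratio
lies in `[0, 1)` and `ω_2 = ζ(ζ - 1)/2 ≥ 0`, so from index 2 on the `ω_k` are nonnegative and
nonincreasing. For `k ≥ 3` the weight `ϑ_k` is a nonnegative combination of `ω_k` and `ω_{k-1}`,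
both taken from that tail, so it inherits both properties. The two remaining inequalities are
explicit: `ϑ_0 = ζ/2` and `ϑ_3 = ζ(ζ - 1)(2 - ζ)(ζ + 3)/12`.
-/

open Set

noncomputable def grunwaldWeight (ζ : ℝ) (k : ℕ) : ℝ :=
  (-1 : ℝ) ^ k * ((∏ i ∈ Finset.range k, (ζ - i)) / (Nat.factorial k : ℝ))

namespace grunwaldWeight

variable {ζ : ℝ}

@[simp]
lemma zero : grunwaldWeight ζ 0 = 1 := by
  simp [grunwaldWeight]

lemma succ (k : ℕ) :
    grunwaldWeight ζ (k + 1) = grunwaldWeight ζ k * ((k - ζ) / (k + 1)) := by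
  have hfact : (k.factorial : ℝ) ≠ 0 := Nat.cast_ne_zero.mpr k.factorial_ne_zero
  have hk : (k : ℝ) + 1 ≠ 0 := by positivity
  simp only [grunwaldWeight, Finset.prod_range_succ, Nat.factorial_succ, pow_succ]
  push_cast
  field_simp
  ring

lemma two : grunwaldWeight ζ 2 = ζ * (ζ - 1) / 2 := by
  simp only [succ, zero]
  norm_num
  ring

lemma three : grunwaldWeight ζ 3 = ζ * (ζ - 1) * (2 - ζ) / 6 := by
  rw [succ, two]
  norm_num
  ring

lemma nonneg (h1 : 1 ≤ ζ) (h2 : ζ ≤ 2) {k : ℕ} (hk : 2 ≤ k) : 0 ≤ grunwaldWeight ζ k := by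
  induction k, hk using Nat.le_induction with
  | base => rw [two]; nlinarith
  | succ n hn ih =>
    have hn' : (2 : ℝ) ≤ n := by exact_mod_cast hn
    rw [succ]
    exact mul_nonneg ih (div_nonneg (by linarith) (by positivity))

lemma antitoneOn (h1 : 1 ≤ ζ) (h2 : ζ ≤ 2) : AntitoneOn (grunwaldWeight ζ) (Ici 2) := by
  refine antitoneOn_nat_Ici_of_succ_le fun k hk => ?_
  have hratio : ((k : ℝ) - ζ) / (k + 1) ≤ 1 := by
    rw [div_le_one (by positivity)]
    linarith
  rw [succ]
  exact mul_le_of_le_one_right (nonneg h1 h2 hk) hratio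

end grunwaldWeight

lemma antitoneOn_mul_add_mul_pred {u : ℕ → ℝ} {a b : ℝ} {m : ℕ} (ha : 0 ≤ a) (hb : 0 ≤ b)
    (hu : AntitoneOn u (Ici m)) : AntitoneOn (fun k => a * u k + b * u (k - 1)) (Ici (m + 1)) := by
  intro i hi j hj hij
  simp only [mem_Ici] at hi hj
  dsimp only
  gcongr
  · exact hu (mem_Ici.2 (by omega)) (mem_Ici.2 (by omega)) hij
  · exact hu (mem_Ici.2 (by omega)) (mem_Ici.2 (by omega)) (by omega)

lemma wsgdCoeff_three_le_half (h0 : 0 ≤ ζ) (h2 : ζ ≤ 2) :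
    ζ / 2 * grunwaldWeight ζ 3 + (2 - ζ) / 2 * grunwaldWeight ζ 2 ≤ ζ / 2 := by
  rw [grunwaldWeight.three, grunwaldWeight.two]
  nlinarith [mul_nonneg (mul_nonneg h0 h0) (sub_nonneg.2 h2), sq_nonneg (ζ - 1)]

/-- For `1 < ζ ≤ 2`, the WSGD coefficients satisfy
`1 ≥ ϑ₀ ≥ ϑ₃ ≥ ϑ₄ ≥ ... ≥ 0`. -/
theorem stmt_10 (ζ : ℝ) (hζ : 1 < ζ) (hζ2 : ζ ≤ 2) (ω θ : ℕ → ℝ)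
    (hω : ∀ k, ω k = (-1 : ℝ) ^ k *
      ((∏ i ∈ Finset.range k, (ζ - i)) / (Nat.factorial k : ℝ)))
    (hθ0 : θ 0 = (ζ/2) * ω 0)
    (hθ : ∀ k : ℕ, 1 ≤ k → θ k = (ζ/2) * ω k + ((2 - ζ)/2) * ω (k - 1)) :
    θ 0 ≤ 1 ∧ θ 3 ≤ θ 0 ∧ (∀ k : ℕ, 3 ≤ k → θ (k + 1) ≤ θ k) ∧
      (∀ k : ℕ, 3 ≤ k → 0 ≤ θ k) := by
  obtain rfl : ω = grunwaldWeight ζ := funext hω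
  have hθ0' : θ 0 = ζ / 2 := by rw [hθ0, grunwaldWeight.zero, mul_one]
  have hθ_tail : AntitoneOn θ (Ici 3) := fun i hi j hj hij => by
    rw [hθ i (le_trans (by norm_num) hi), hθ j (le_trans (by norm_num) hj)]
    exact antitoneOn_mul_add_mul_pred (by linarith) (by linarith)
      (grunwaldWeight.antitoneOn hζ.le hζ2) hi hj hij
  refine ⟨by linarith, ?_, fun k hk => hθ_tail hk (mem_Ici.2 (by omega)) k.le_succ, fun k hk => ?_⟩
  · rw [hθ 3 (by norm_num), hθ0']
    exact wsgdCoeff_three_le_half (by linarith) hζ2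
  · rw [hθ k (by omega)]
    have hωk := grunwaldWeight.nonneg hζ.le hζ2 (show 2 ≤ k by omega)
    have hωpred := grunwaldWeight.nonneg hζ.le hζ2 (show 2 ≤ k - 1 by omega)
    have hcoeff : 0 ≤ 2 - ζ := by linarith
    positivity
end

section
/- The Laplace transform of the generalized delay Mittag-Leffler function G_{α,β}^{λ,τ,m}(t) = Σ_{j=0}^∞ C(j+m, j) λ^j (t - (m+j)τ)^{α(m+j)+β-1} / Γ(α(m+j)+β) · H(t - (m+j)τ) equals s^{α-β} e^{-msτ} / (s^α - λ e^{-sτ})^{m+1} for s > 0 sufficiently large. -/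
/-
The `j`-th term of the series is `C(j+m, j) λ^j` times the delayed power `(t - a)₊^(p-1) / Γ(p)`
with `a = (m+j)τ`, `p = α(m+j) + β`; shifting by `a` and using the Gamma integral, its Laplace
transform is `e^{-as} s^{-p}`. These delayed powers are non-negative, and their coefficients'
absolute values give the convergent series `∑ C(j+m, m) (|λ| e^{-sτ} / s^α)^j`, so integral and sum
may be interchanged. The negative-binomial series `∑ C(j+m, m) x^j = (1 - x)^{-(m+1)}` at
`x = λ e^{-sτ} / s^α` then yields the closed form.
-/

open Real MeasureTheory Set

section TimeShift

variable {E : Type*} [NormedAddCommGroup E] {a : ℝ}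

lemma Ioi_zero_inter_Ici_ae_eq (ha : 0 ≤ a) : (Ioi 0 ∩ Ici a : Set ℝ) =ᵐ[volume] Ioi a := by
  have h := (ae_eq_refl (Ioi (0 : ℝ))).inter (Ioi_ae_eq_Ici (a := a) (μ := volume)).symm
  rwa [Ioi_inter_Ioi, max_eq_right ha] at h

lemma integrableOn_Ioi_indicator_Ici_iff {F : ℝ → E} (ha : 0 ≤ a) :
    IntegrableOn ((Ici a).indicator F) (Ioi 0) ↔ IntegrableOn (fun u => F (u + a)) (Ioi 0) := by
  rw [integrableOn_indicator_iff measurableSet_Ici, inter_comm,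
    integrableOn_congr_set_ae (Ioi_zero_inter_Ici_ae_eq ha)]
  have h := (measurePreserving_add_right volume a).integrableOn_comp_preimage
    (measurableEmbedding_addRight a) (f := F) (s := Ioi a)
  rwa [preimage_add_const_Ioi, sub_self, Iff.comm] at h

lemma setIntegral_Ioi_indicator_Ici [NormedSpace ℝ E] (F : ℝ → E) (ha : 0 ≤ a) :
    ∫ t in Ioi 0, (Ici a).indicator F t = ∫ u in Ioi 0, F (u + a) := by
  rw [setIntegral_indicator measurableSet_Ici, setIntegral_congr_set (Ioi_zero_inter_Ici_ae_eq ha)]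
  have h := (measurePreserving_add_right volume a).setIntegral_preimage_emb
    (measurableEmbedding_addRight a) F (Ioi a)
  rwa [preimage_add_const_Ioi, sub_self, eq_comm] at h

end TimeShift

lemma integrableOn_rpow_sub_one_mul_exp_neg_mul {p s : ℝ} (hp : 0 < p) (hs : 0 < s) :
    IntegrableOn (fun t : ℝ => t ^ (p - 1) * exp (-(s * t))) (Ioi 0) := by
  simpa using integrableOn_rpow_mul_exp_neg_mul_rpow (by linarith : -1 < p - 1) one_pos hs

noncomputable def delayedPow (a p t : ℝ) : ℝ :=
  (Ici a).indicator (fun t => (t - a) ^ (p - 1) / Gamma p) t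

section DelayedPow

variable {a p s : ℝ}

lemma delayedPow_nonneg (hp : 0 < p) (t : ℝ) : 0 ≤ delayedPow a p t :=
  indicator_nonneg (fun _ ht => div_nonneg (rpow_nonneg (sub_nonneg.mpr ht) _)
    (Gamma_pos_of_pos hp).le) t

lemma exp_neg_mul_mul_delayedPow_eq_indicator (s a p : ℝ) :
    (fun t => exp (-(s * t)) * delayedPow a p t) =
      (Ici a).indicator (fun t => exp (-(s * t)) * ((t - a) ^ (p - 1) / Gamma p)) := by
  ext t
  rw [delayedPow, indicator_mul_right]

lemma exp_neg_mul_add_mul_rpow_add_sub (s a p u : ℝ) :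
    exp (-(s * (u + a))) * ((u + a - a) ^ (p - 1) / Gamma p) =
      exp (-(s * a)) / Gamma p * (u ^ (p - 1) * exp (-(s * u))) := by
  rw [add_sub_cancel_right, mul_add, neg_add, exp_add]
  ring

lemma integrableOn_exp_neg_mul_delayedPow (hs : 0 < s) (ha : 0 ≤ a) (hp : 0 < p) :
    IntegrableOn (fun t => exp (-(s * t)) * delayedPow a p t) (Ioi 0) := by
  rw [exp_neg_mul_mul_delayedPow_eq_indicator, integrableOn_Ioi_indicator_Ici_iff ha]
  simp_rw [exp_neg_mul_add_mul_rpow_add_sub]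
  exact (integrableOn_rpow_sub_one_mul_exp_neg_mul hp hs).const_mul _

lemma integral_exp_neg_mul_delayedPow (hs : 0 < s) (ha : 0 ≤ a) (hp : 0 < p) :
    ∫ t in Ioi 0, exp (-(s * t)) * delayedPow a p t = exp (-(s * a)) * (1 / s) ^ p := by
  rw [exp_neg_mul_mul_delayedPow_eq_indicator, setIntegral_Ioi_indicator_Ici _ ha]
  simp_rw [exp_neg_mul_add_mul_rpow_add_sub]
  rw [integral_const_mul, integral_rpow_mul_exp_neg_mul_Ioi hp hs]
  field_simp [(Gamma_pos_of_pos hp).ne']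

end DelayedPow

lemma integral_tsum_mul_ofReal {α ι : Type*} [MeasurableSpace α] [Countable ι] {μ : Measure α}
    {c : ι → ℂ} {f : ι → α → ℝ} (hf : ∀ j, Integrable (f j) μ) (hf0 : ∀ j x, 0 ≤ f j x)
    (hsum : Summable fun j => ‖c j‖ * ∫ x, f j x ∂μ) :
    ∫ x, ∑' j, c j * f j x ∂μ = ∑' j, c j * ∫ x, f j x ∂μ := by
  have hnorm : ∀ j, ∫ x, ‖c j * (f j x : ℂ)‖ ∂μ = ‖c j‖ * ∫ x, f j x ∂μ := fun j => by
    simp_rw [norm_mul, Complex.norm_real, Real.norm_of_nonneg (hf0 j _)]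
    exact integral_const_mul _ _
  rw [← integral_tsum_of_summable_integral_norm (F := fun j x => c j * (f j x : ℂ))
    (fun j => ((hf j).ofReal (𝕜 := ℂ)).const_mul (c j)) (hsum.congr fun j => (hnorm j).symm)]
  simp_rw [integral_const_mul, integral_complex_ofReal]

section DelayedSeries

variable {s : ℝ}

lemma one_div_rpow_mul_natCast_add (hs : 0 < s) (α β : ℝ) (n : ℕ) :
    (1 / s) ^ (α * n + β) = s ^ (α - β) / (s ^ α) ^ (n + 1) := by
  rw [← rpow_natCast, ← rpow_mul hs.le, one_div, inv_rpow hs.le, ← rpow_neg hs.le,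
    div_eq_mul_inv, ← rpow_neg hs.le, ← rpow_add hs]
  push_cast
  ring_nf

lemma exp_mul_one_div_rpow_eq_mul_pow (hs : 0 < s) (α β τ : ℝ) (m j : ℕ) :
    exp (-(s * ((m + j) * τ))) * (1 / s) ^ (α * (m + j) + β) =
      s ^ (α - β) * exp (-(m * s * τ)) / (s ^ α) ^ (m + 1) * (exp (-(s * τ)) / s ^ α) ^ j := by
  rw [show (m : ℝ) + j = (m + j : ℕ) by push_cast; ring, one_div_rpow_mul_natCast_add hs,
    show -(s * ((m + j : ℕ) * τ)) = (m + j : ℕ) * -(s * τ) by ring,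
    show -((m : ℝ) * s * τ) = m * -(s * τ) by ring, exp_nat_mul, exp_nat_mul, div_pow]
  have := (rpow_pos_of_pos hs α).ne'
  field_simp
  ring

lemma norm_mul_exp_div_rpow_lt_one {α τ : ℝ} {lam : ℂ} (hs : 0 < s)
    (hlt : ‖lam‖ * exp (-(s * τ)) < s ^ α) : ‖lam‖ * (exp (-(s * τ)) / s ^ α) < 1 := by
  rwa [← mul_div_assoc, div_lt_one (rpow_pos_of_pos hs α)]

lemma summable_norm_choose_mul_pow_mul_exp_mul_rpow {α τ : ℝ} {lam : ℂ} (hs : 0 < s) (β : ℝ)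
    (hlt : ‖lam‖ * exp (-(s * τ)) < s ^ α) (m : ℕ) :
    Summable fun j : ℕ => ‖((j + m).choose j : ℂ) * lam ^ j‖ *
      (exp (-(s * ((m + j) * τ))) * (1 / s) ^ (α * (m + j) + β)) := by
  have hr : ‖‖lam‖ * (exp (-(s * τ)) / s ^ α)‖ < 1 := by
    rw [norm_of_nonneg (by positivity)]
    exact norm_mul_exp_div_rpow_lt_one hs hlt
  refine ((summable_choose_mul_geometric_of_norm_lt_one m hr).mul_left
    (s ^ (α - β) * exp (-(m * s * τ)) / (s ^ α) ^ (m + 1))).congr fun j => ?_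
  rw [exp_mul_one_div_rpow_eq_mul_pow hs, norm_mul, norm_pow, Complex.norm_natCast,
    Nat.choose_symm_add]
  ring

lemma tsum_choose_mul_pow_mul_exp_mul_rpow {α τ : ℝ} {lam : ℂ} (hs : 0 < s) (β : ℝ)
    (hlt : ‖lam‖ * exp (-(s * τ)) < s ^ α) (m : ℕ) :
    ∑' j : ℕ, ((j + m).choose j : ℂ) * lam ^ j *
        ((exp (-(s * ((m + j) * τ))) * (1 / s) ^ (α * (m + j) + β) : ℝ) : ℂ) =
      ((s ^ (α - β) : ℝ) : ℂ) * ((exp (-(m * s * τ)) : ℝ) : ℂ) /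
        (((s ^ α : ℝ) : ℂ) - lam * ((exp (-(s * τ)) : ℝ) : ℂ)) ^ (m + 1) := by
  have hx : ‖lam * ((exp (-(s * τ)) / s ^ α : ℝ) : ℂ)‖ < 1 := by
    rw [norm_mul, Complex.norm_real, norm_of_nonneg (by positivity)]
    exact norm_mul_exp_div_rpow_lt_one hs hlt
  have hr : ((s ^ α : ℝ) : ℂ) ≠ 0 := by exact_mod_cast (rpow_pos_of_pos hs α).ne'
  have hD : ((s ^ α : ℝ) : ℂ) - lam * ((exp (-(s * τ)) : ℝ) : ℂ) ≠ 0 := by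
    refine sub_ne_zero.mpr fun h => hlt.ne ?_
    have h' := congrArg norm h.symm
    rwa [norm_mul, Complex.norm_real, Complex.norm_real, norm_of_nonneg (exp_pos _).le,
      norm_of_nonneg (rpow_pos_of_pos hs α).le] at h'
  have hterm : ∀ j : ℕ, ((j + m).choose j : ℂ) * lam ^ j *
      ((exp (-(s * ((m + j) * τ))) * (1 / s) ^ (α * (m + j) + β) : ℝ) : ℂ) =
        ((s ^ (α - β) * exp (-(m * s * τ)) / (s ^ α) ^ (m + 1) : ℝ) : ℂ) *
          ((j + m).choose m * (lam * ((exp (-(s * τ)) / s ^ α : ℝ) : ℂ)) ^ j) := fun j => by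
    rw [exp_mul_one_div_rpow_eq_mul_pow hs, Nat.choose_symm_add]
    push_cast
    ring
  rw [tsum_congr hterm, tsum_mul_left, tsum_choose_mul_geometric_of_norm_lt_one m hx]
  simp only [Complex.ofReal_mul, Complex.ofReal_div, Complex.ofReal_pow]
  rw [← mul_div_assoc lam, one_sub_div hr, div_pow]
  field_simp

end DelayedSeries

/-- The Laplace transform of the generalized delay Mittag–Leffler function
`G_{α,β}^{λ,τ,m}` equals `s^{α-β} e^{-msτ} / (s^α - λ e^{-sτ})^{m+1}` for `s > 0`
sufficiently large. -/
theorem stmt_17 (α β τ : ℝ) (hα : 0 < α) (hβ : 0 < β) (hτ : 0 ≤ τ)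
    (lam : ℂ) (m : ℕ) (H : ℝ → ℝ) (hH : ∀ z, H z = if 0 ≤ z then 1 else 0)
    (G : ℝ → ℂ)
    (hG : ∀ t, G t = ∑' j : ℕ, ((j + m).choose j : ℂ) * lam ^ j *
        ((((t - (m + j) * τ) ^ (α * (m + j) + β - 1) : ℝ) : ℂ) /
          ((Real.Gamma (α * (m + j) + β) : ℝ) : ℂ)) * (H (t - (m + j) * τ) : ℂ)) :
    ∀ s : ℝ, 0 < s → ‖lam‖ * Real.exp (-(s * τ)) < s ^ α →
      (∫ t in Set.Ioi (0 : ℝ), Complex.exp (-(s * t)) * G t) =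
        (((s ^ (α - β) : ℝ) : ℂ) * ((Real.exp (-(m * s * τ)) : ℝ) : ℂ)) /
          (((s ^ α : ℝ) : ℂ) - lam * ((Real.exp (-(s * τ)) : ℝ) : ℂ)) ^ (m + 1) := by
  intro s hs hlt
  have ha : ∀ j : ℕ, 0 ≤ ((m : ℝ) + j) * τ := fun j => by positivity
  have hp : ∀ j : ℕ, 0 < α * ((m : ℝ) + j) + β := fun j => by positivity
  set f : ℕ → ℝ → ℝ := fun j t =>
    exp (-(s * t)) * delayedPow (((m : ℝ) + j) * τ) (α * ((m : ℝ) + j) + β) t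
  have hf : ∀ j, ∫ t in Ioi 0, f j t =
      exp (-(s * ((m + j) * τ))) * (1 / s) ^ (α * (m + j) + β) := fun j =>
    integral_exp_neg_mul_delayedPow hs (ha j) (hp j)
  have hintegrand : ∀ t : ℝ, Complex.exp (-(s * t)) * G t =
      ∑' j, ((j + m).choose j : ℂ) * lam ^ j * f j t := fun t => by
    rw [hG, ← tsum_mul_left]
    refine tsum_congr fun j => ?_
    simp only [f, delayedPow, indicator_apply, mem_Ici, hH, sub_nonneg]
    split_ifs <;> push_cast <;> ring
  calc ∫ t in Ioi (0 : ℝ), Complex.exp (-(s * t)) * G t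
      = ∫ t in Ioi 0, ∑' j, ((j + m).choose j : ℂ) * lam ^ j * f j t := by simp_rw [hintegrand]
    _ = ∑' j, ((j + m).choose j : ℂ) * lam ^ j * ∫ t in Ioi 0, f j t :=
        integral_tsum_mul_ofReal (fun j => integrableOn_exp_neg_mul_delayedPow hs (ha j) (hp j))
          (fun j t => mul_nonneg (exp_pos _).le (delayedPow_nonneg (hp j) t))
          ((summable_norm_choose_mul_pow_mul_exp_mul_rpow hs β hlt m).congr fun j => by rw [hf])
    _ = _ := by simp_rw [hf]; exact tsum_choose_mul_pow_mul_exp_mul_rpow hs β hlt m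
end
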